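/- arXiv:2302.05513 — 2 statements merged into one kernel-verified Lean document; each statement's English description precedes it below -/
import Mathlib

section
/- If two random variables M1 and M2 are conditionally independent given (T, Û), and a random variable U satisfies σ(U) ⊆ σ(Û), then it is not necessarily the case that M1 and M2 are conditionally independent given (T, U); however, if σ(Û) = σ(U, V) with V independent of (M1, M2, T, U), then conditional independence of M1 and M2 given (T, Û) implies conditional independence given (T, U). -/
/-!
Coarsening the conditioning can destroy conditional independence: for a fair coin `M`, the pair
`(M, M)` is conditionally independent given `M` but not given a constant.

If instead `σ(Û) = σ(U, V)` with `V` independent of `(M1, M2, T, U)`, then adjoining the independent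
information `V` does not change the conditional law of `Mᵢ` given `(T, U)`:
`P(A | T, U, V) = P(A | T, U)` for events `A` of `M1` or of `M2`, as one checks by integrating
both sides over the π-system of sets `{(T, U) ∈ C} ∩ {V ∈ D}`. The tower property then gives
`P(A ∩ B | T, U) = E[P(A | T, U, V) P(B | T, U, V) | T, U] = E[P(A | T, U) P(B | T, U) | T, U]
  = P(A | T, U) P(B | T, U)`.
-/

open MeasureTheory ProbabilityTheory MeasurableSpace

section

variable {Ω E : Type*} {m₁ m₂ mΩ : MeasurableSpace Ω} {μ : Measure Ω}
  [NormedAddCommGroup E] [NormedSpace ℝ E]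

lemma isPiSystem_image2_inter :
    IsPiSystem (Set.image2 (· ∩ ·) {s | MeasurableSet[m₁] s} {t | MeasurableSet[m₂] t}) := by
  rintro _ ⟨s, hs, t, ht, rfl⟩ _ ⟨s', hs', t', ht', rfl⟩ -
  exact ⟨s ∩ s', hs.inter hs', t ∩ t', ht.inter ht', (Set.inter_inter_inter_comm s t s' t').symm⟩

lemma sup_eq_generateFrom_image2_inter :
    m₁ ⊔ m₂ =
      generateFrom (Set.image2 (· ∩ ·) {s | MeasurableSet[m₁] s} {t | MeasurableSet[m₂] t}) := by
  refine le_antisymm (sup_le (fun s hs ↦ ?_) (fun t ht ↦ ?_)) (generateFrom_le ?_)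
  · exact measurableSet_generateFrom ⟨s, hs, .univ, .univ, Set.inter_univ s⟩
  · exact measurableSet_generateFrom ⟨.univ, .univ, t, ht, Set.univ_inter t⟩
  · rintro _ ⟨s, hs, t, ht, rfl⟩
    exact (le_sup_left (b := m₂) s hs).inter (le_sup_right (a := m₁) t ht)

lemma setIntegral_eq_of_forall_inter_eq (hm₁ : m₁ ≤ mΩ) (hm₂ : m₂ ≤ mΩ) {f g : Ω → E}
    (hf : Integrable f μ) (hg : Integrable g μ)
    (hfg : ∀ s t, MeasurableSet[m₁] s → MeasurableSet[m₂] t →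
      ∫ ω in s ∩ t, f ω ∂μ = ∫ ω in s ∩ t, g ω ∂μ)
    {u : Set Ω} (hu : MeasurableSet[m₁ ⊔ m₂] u) :
    ∫ ω in u, f ω ∂μ = ∫ ω in u, g ω ∂μ := by
  have hle : m₁ ⊔ m₂ ≤ mΩ := sup_le hm₁ hm₂
  induction u, hu using induction_on_inter sup_eq_generateFrom_image2_inter
    isPiSystem_image2_inter with
  | empty => simp
  | basic _ hu =>
    obtain ⟨s, hs, t, ht, rfl⟩ := hu
    exact hfg s t hs ht
  | compl u hu ih =>
    have huniv := hfg .univ .univ .univ .univ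
    rw [Set.inter_univ, setIntegral_univ, setIntegral_univ] at huniv
    rw [setIntegral_compl (hle u hu) hf, setIntegral_compl (hle u hu) hg, huniv, ih]
  | iUnion u hdisj hu ih =>
    rw [integral_iUnion (fun i ↦ hle _ (hu i)) hdisj hf.integrableOn,
      integral_iUnion (fun i ↦ hle _ (hu i)) hdisj hg.integrableOn]
    exact tsum_congr ih

end

namespace ProbabilityTheory

variable {Ω : Type*} {m₁ m₂ m' mV : MeasurableSpace Ω} {mΩ : MeasurableSpace Ω} {μ : Measure Ω}

lemma Indep.setIntegral_inter_eq_mul (hm₁ : m₁ ≤ mΩ) (hm₂ : m₂ ≤ mΩ) (hind : Indep m₁ m₂ μ)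
    {f : Ω → ℝ} (hf : StronglyMeasurable[m₁] f) {s t : Set Ω} (hs : MeasurableSet[m₁] s)
    (ht : MeasurableSet[m₂] t) :
    ∫ ω in s ∩ t, f ω ∂μ = μ.real t * ∫ ω in s, f ω ∂μ := by
  have hfs : StronglyMeasurable[m₁] (s.indicator f) := hf.indicator hs
  calc ∫ ω in s ∩ t, f ω ∂μ = ∫ ω in t, id (s.indicator f ω) ∂μ := by
        rw [Set.inter_comm, ← setIntegral_indicator (hm₁ s hs)]; rfl
    _ = μ.real t * ∫ ω, s.indicator f ω ∂μ :=
        (indep_of_indep_of_le_right hind.symm hfs.measurable.comap_le).setIntegral_eq_mul hm₂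
          (hfs.mono hm₁).measurable.aemeasurable ht aestronglyMeasurable_id
    _ = μ.real t * ∫ ω in s, f ω ∂μ := by rw [integral_indicator (hm₁ s hs)]

theorem condExp_sup_ae_eq_of_indep [IsFiniteMeasure μ] (hm₁ : m₁ ≤ mΩ)
    (hm₂ : m₂ ≤ mΩ) (hmV : mV ≤ mΩ) (hind : Indep (m₁ ⊔ m₂) mV μ) {f : Ω → ℝ}
    (hf : StronglyMeasurable[m₁] f) (hfi : Integrable f μ) :
    μ[f | m₂ ⊔ mV] =ᵐ[μ] μ[f | m₂] := by
  have hm₁₂ : m₁ ⊔ m₂ ≤ mΩ := sup_le hm₁ hm₂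
  have hg : StronglyMeasurable[m₂] (μ[f | m₂]) := stronglyMeasurable_condExp
  refine (ae_eq_condExp_of_forall_setIntegral_eq (sup_le hm₂ hmV) hfi
    (fun _ _ _ ↦ integrable_condExp.integrableOn) (fun u hu _ ↦ ?_)
    (hg.mono (le_sup_left : m₂ ≤ m₂ ⊔ mV)).aestronglyMeasurable).symm
  refine setIntegral_eq_of_forall_inter_eq hm₂ hmV integrable_condExp hfi (fun s t hs ht ↦ ?_) hu
  have hs' : MeasurableSet[m₁ ⊔ m₂] s := le_sup_right (a := m₁) s hs
  rw [hind.setIntegral_inter_eq_mul hm₁₂ hmV (hg.mono le_sup_right) hs' ht,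
    hind.setIntegral_inter_eq_mul hm₁₂ hmV (hf.mono le_sup_left) hs' ht,
    setIntegral_condExp hm₂ hfi hs]

lemma ae_norm_condExp_indicator_le_one [IsFiniteMeasure μ] (hm' : m' ≤ mΩ) {s : Set Ω}
    (hs : MeasurableSet s) : ∀ᵐ ω ∂μ, ‖(μ⟦s | m'⟧) ω‖ ≤ 1 := by
  have hnonneg : 0 ≤ᵐ[μ] μ⟦s | m'⟧ :=
    condExp_nonneg (.of_forall fun ω ↦ s.indicator_nonneg (fun _ _ ↦ zero_le_one) ω)
  have hle : μ⟦s | m'⟧ ≤ᵐ[μ] μ[fun _ ↦ (1 : ℝ) | m'] :=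
    condExp_mono ((integrable_const 1).indicator hs) (integrable_const 1)
      (.of_forall fun ω ↦ s.indicator_le_self' (fun _ _ ↦ zero_le_one) ω)
  rw [condExp_const hm'] at hle
  filter_upwards [hnonneg, hle] with ω h0 h1
  rw [Real.norm_eq_abs, abs_of_nonneg h0]
  exact h1

variable [StandardBorelSpace Ω]

theorem CondIndep.of_sup_of_indep [IsFiniteMeasure μ] (hm₁ : m₁ ≤ mΩ) (hm₂ : m₂ ≤ mΩ)
    (hm' : m' ≤ mΩ) (hmV : mV ≤ mΩ) (hind₁ : Indep (m₁ ⊔ m') mV μ)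
    (hind₂ : Indep (m₂ ⊔ m') mV μ) (h : CondIndep (m' ⊔ mV) m₁ m₂ (sup_le hm' hmV) μ) :
    CondIndep m' m₁ m₂ hm' μ := by
  rw [condIndep_iff _ _ _ _ hm₁ hm₂] at h ⊢
  intro s t hs ht
  have hdropV : ∀ {m : MeasurableSpace Ω} {u : Set Ω}, m ≤ mΩ → Indep (m ⊔ m') mV μ →
      MeasurableSet[m] u → μ⟦u | m' ⊔ mV⟧ =ᵐ[μ] μ⟦u | m'⟧ := fun hm hind hu ↦
    condExp_sup_ae_eq_of_indep hm hm' hmV hind (stronglyMeasurable_const.indicator hu)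
      ((integrable_const 1).indicator (hm _ hu))
  calc μ⟦s ∩ t | m'⟧ =ᵐ[μ] μ[μ⟦s ∩ t | m' ⊔ mV⟧ | m'] :=
        (condExp_condExp_of_le le_sup_left (sup_le hm' hmV)).symm
    _ =ᵐ[μ] μ[μ⟦s | m' ⊔ mV⟧ * μ⟦t | m' ⊔ mV⟧ | m'] := condExp_congr_ae (h s t hs ht)
    _ =ᵐ[μ] μ[μ⟦s | m'⟧ * μ⟦t | m'⟧ | m'] :=
        condExp_congr_ae ((hdropV hm₁ hind₁ hs).mul (hdropV hm₂ hind₂ ht))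
    _ =ᵐ[μ] μ⟦s | m'⟧ * μ[μ⟦t | m'⟧ | m'] :=
        condExp_stronglyMeasurable_mul_of_bound hm' stronglyMeasurable_condExp integrable_condExp 1
          (ae_norm_condExp_indicator_le_one hm' (hm₁ s hs))
    _ = μ⟦s | m'⟧ * μ⟦t | m'⟧ := by
        rw [condExp_of_stronglyMeasurable hm' stronglyMeasurable_condExp integrable_condExp]

theorem condIndep_of_le_left [IsFiniteMeasure μ] (hm₂ : m₂ ≤ mΩ) (hm' : m' ≤ mΩ)
    (h : m₁ ≤ m') : CondIndep m' m₁ m₂ hm' μ := by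
  rw [condIndep_iff _ _ _ _ (h.trans hm') hm₂]
  intro s t hs ht
  have hs' : MeasurableSet[m'] s := h s hs
  have hsm : StronglyMeasurable[m'] (s.indicator fun _ ↦ (1 : ℝ)) :=
    stronglyMeasurable_const.indicator hs'
  have hst : (s ∩ t).indicator (fun _ ↦ (1 : ℝ))
      = s.indicator (fun _ ↦ 1) * t.indicator (fun _ ↦ 1) := Set.inter_indicator_one
  rw [hst, condExp_of_stronglyMeasurable hm' hsm
      ((integrable_const 1).indicator (hm' s hs'))]
  exact condExp_stronglyMeasurable_mul_of_bound hm' hsm ((integrable_const 1).indicator (hm₂ t ht))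
    1 (.of_forall fun ω ↦ (norm_indicator_le_norm_self _ ω).trans norm_one.le)

lemma CondIndepSet.measureReal_eq_zero_or_one_of_eq_bot [IsProbabilityMeasure μ]
    (hm' : m' ≤ mΩ) (hbot : m' = ⊥) {s : Set Ω} (hs : MeasurableSet s)
    (h : CondIndepSet m' hm' s s μ) : μ.real s = 0 ∨ μ.real s = 1 := by
  subst hbot
  obtain ⟨ω, hω⟩ := (condExp_eq_zero_or_one_of_condIndepSet_self hm' hs h).exists
  rwa [condExp_bot, integral_indicator_const 1 hs, smul_eq_mul, mul_one] at hω

end ProbabilityTheory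

/-- If M1 ⟂ M2 | (T,Û) and σ(U) ⊆ σ(Û), conditional independence of M1, M2 given (T,U) does
not follow in general; but it does follow when σ(Û) = σ(U,V) with V independent of
(M1, M2, T, U). -/
theorem condIndep_coarsening :
    (¬ ∀ (Ω : Type) [MeasurableSpace Ω] [StandardBorelSpace Ω] [Nonempty Ω]
        (μ : Measure Ω) [IsProbabilityMeasure μ]
        (M1 M2 T U Uhat : Ω → ℝ),
        Measurable M1 → Measurable M2 → Measurable T → Measurable U → Measurable Uhat →
        MeasurableSpace.comap U inferInstance ≤ MeasurableSpace.comap Uhat inferInstance →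
        ∀ (h1 : MeasurableSpace.comap (fun ω => (T ω, Uhat ω)) inferInstance
              ≤ (inferInstance : MeasurableSpace Ω))
          (h2 : MeasurableSpace.comap (fun ω => (T ω, U ω)) inferInstance
              ≤ (inferInstance : MeasurableSpace Ω)),
        CondIndepFun (MeasurableSpace.comap (fun ω => (T ω, Uhat ω)) inferInstance) h1 M1 M2 μ →
        CondIndepFun (MeasurableSpace.comap (fun ω => (T ω, U ω)) inferInstance) h2 M1 M2 μ)
    ∧
    (∀ (Ω : Type) [MeasurableSpace Ω] [StandardBorelSpace Ω] [Nonempty Ω]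
        (μ : Measure Ω) [IsProbabilityMeasure μ]
        (M1 M2 T U V Uhat : Ω → ℝ),
        Measurable M1 → Measurable M2 → Measurable T → Measurable U → Measurable V →
        Measurable Uhat →
        MeasurableSpace.comap Uhat inferInstance
          = MeasurableSpace.comap (fun ω => (U ω, V ω)) inferInstance →
        IndepFun V (fun ω => (M1 ω, M2 ω, T ω, U ω)) μ →
        ∀ (h1 : MeasurableSpace.comap (fun ω => (T ω, Uhat ω)) inferInstance
              ≤ (inferInstance : MeasurableSpace Ω))
          (h2 : MeasurableSpace.comap (fun ω => (T ω, U ω)) inferInstance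
              ≤ (inferInstance : MeasurableSpace Ω)),
        CondIndepFun (MeasurableSpace.comap (fun ω => (T ω, Uhat ω)) inferInstance) h1 M1 M2 μ →
        CondIndepFun (MeasurableSpace.comap (fun ω => (T ω, U ω)) inferInstance) h2 M1 M2 μ) := by
  refine ⟨fun h ↦ ?_, fun Ω _ _ _ μ _ M1 M2 T U V Uhat hM1 hM2 _ _ hV _ hUhat hind _ h2 hCI ↦ ?_⟩
  · set M : Bool → ℝ := fun b ↦ if b then 1 else 0
    have hM : Measurable M := measurable_from_top
    have hCI := h Bool (uniformOn .univ) M M (fun _ ↦ 0) (fun _ ↦ 0) M hM hM measurable_const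
      measurable_const hM (by rw [comap_const]; exact bot_le) le_top le_top
      ((condIndepFun_iff_condIndep _ _ _ _ _).2
        (condIndep_of_le_left hM.comap_le le_top (le_sup_right.trans_eq (comap_prodMk _ _).symm)))
    have h01 := ((condIndepFun_iff_condIndepSet_preimage hM hM).1 hCI {1} {1}
      (measurableSet_singleton 1) (measurableSet_singleton 1)).measureReal_eq_zero_or_one_of_eq_bot
        le_top (comap_const _) (hM (measurableSet_singleton 1))
    have hpre : M ⁻¹' {1} = {true} := by ext b; cases b <;> simp [M]
    rw [hpre, measureReal_def, uniformOn_univ] at h01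
    simp at h01
  · rw [condIndepFun_iff_condIndep] at hCI ⊢
    rw [IndepFun_iff_Indep] at hind
    simp only [inferInstance, Prod.instMeasurableSpace, comap_prodMk] at hUhat hCI hind h2 ⊢
    simp only [hUhat, ← sup_assoc] at hCI
    exact CondIndep.of_sup_of_indep hM1.comap_le hM2.comap_le h2 hV.comap_le
      (indep_of_indep_of_le_left hind.symm (sup_le_sup_left le_sup_right _))
      (indep_of_indep_of_le_left hind.symm le_sup_right) hCI
end

section
/- Suppose Ûₙ → Û in probability where Û = f(T,M) is deterministic given observed data, and suppose the conditional expectations u ↦ E[Y | T=t, M=m, Û=u] are uniformly bounded and continuous in u. Then the plug-in identification functional δₙ(t) computed with Ûₙ converges to δ(t) computed with Û. -/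
open MeasureTheory Filter

/-- If Ûₙ → Û in probability, where Û = f(T,M) is deterministic in the observed data, and
the outcome regressions and conditional mediator distributions are bounded and continuous
in u, then the plug-in mediation functional δₙ(t) converges to δ(t). -/
theorem plugin_identification_convergence
    {Ω 𝕄 : Type*} [MeasurableSpace Ω] [Fintype 𝕄]
    (μ : Measure Ω) [IsProbabilityMeasure μ]
    (T : Ω → Bool) (Mobs : Ω → 𝕄)
    (Un : ℕ → Ω → ℝ) (U : Ω → ℝ)
    (hUnmeas : ∀ n, Measurable (Un n)) (hUmeas : Measurable U)
    (hdet : ∃ f : Bool × 𝕄 → ℝ, ∀ ω, U ω = f (T ω, Mobs ω))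
    (hTend : TendstoInMeasure μ Un atTop U)
    -- outcome regression u ↦ E[Y | T=t, M=m, Û=u], bounded and continuous in u
    (μf : Bool → 𝕄 → ℝ → ℝ)
    (hμcont : ∀ (t : Bool) (m : 𝕄), Continuous (μf t m))
    (hμbd : ∃ C, ∀ (t : Bool) (m : 𝕄) (u : ℝ), |μf t m u| ≤ C)
    -- conditional mediator pmf u ↦ P(M=m | T=s, Û=u), bounded and continuous in u
    (p : 𝕄 → Bool → ℝ → ℝ)
    (hpcont : ∀ (m : 𝕄) (s : Bool), Continuous (p m s))
    (hpbd : ∀ (m : 𝕄) (s : Bool) (u : ℝ), |p m s u| ≤ 1)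
    (t : Bool) :
    Tendsto
      (fun n => ∫ ω, (∑ m : 𝕄,
        μf t m (Un n ω) * (p m true (Un n ω) - p m false (Un n ω))) ∂μ)
      atTop
      (nhds (∫ ω, (∑ m : 𝕄,
        μf t m (U ω) * (p m true (U ω) - p m false (U ω))) ∂μ)) := by
  obtain ⟨C, hC⟩ := hμbd
  set G : ℝ → ℝ := fun u => ∑ m : 𝕄, μf t m u * (p m true u - p m false u) with hG
  have hGcont : Continuous G := by
    apply continuous_finset_sum
    intro m _
    exact ((hμcont t m).mul ((hpcont m true).sub (hpcont m false)))
  have hGbd : ∀ u, |G u| ≤ (Fintype.card 𝕄 : ℝ) * (C * 2) := by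
    intro u
    calc |G u| ≤ ∑ m : 𝕄, |μf t m u * (p m true u - p m false u)| :=
          Finset.abs_sum_le_sum_abs _ _
      _ ≤ ∑ m : 𝕄, C * 2 := by
          apply Finset.sum_le_sum
          intro m _
          rw [abs_mul]
          have h1 : |μf t m u| ≤ C := hC t m u
          have h2 : |p m true u - p m false u| ≤ 2 := by
            have := hpbd m true u
            have := hpbd m false u
            have := abs_sub (p m true u) (p m false u)
            linarith [abs_sub_abs_le_abs_sub (p m true u) (p m false u),
              abs_sub (p m true u) (p m false u)]
          exact mul_le_mul h1 h2 (abs_nonneg _) ((abs_nonneg _).trans h1)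
      _ = (Fintype.card 𝕄 : ℝ) * (C * 2) := by
          rw [Finset.sum_const, nsmul_eq_mul]; rfl
  apply tendsto_of_subseq_tendsto
  intro ns hns
  -- the subsequence still converges in measure
  have hTend' : TendstoInMeasure μ (fun n => Un (ns n)) atTop U := by
    intro ε hε
    exact (hTend ε hε).comp hns
  obtain ⟨ms, hms, hae⟩ := hTend'.exists_seq_tendsto_ae
  refine ⟨ms, ?_⟩
  apply tendsto_integral_of_dominated_convergence
    (fun _ => (Fintype.card 𝕄 : ℝ) * (C * 2))
  · intro n
    exact (hGcont.measurable.comp (hUnmeas (ns (ms n)))).aestronglyMeasurable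
  · exact integrable_const _
  · intro n
    filter_upwards with ω
    simpa using hGbd (Un (ns (ms n)) ω)
  · filter_upwards [hae] with ω hω
    exact (hGcont.tendsto (U ω)).comp hω
end
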